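/- For every 0 < ε < 1, there is 0 < η'(ε) < 1 such that for every positive integer n and every Banach space X, the following holds: given a bounded linear operator U : X → ℓ∞ⁿ with ‖U‖ = 1 and x₀ ∈ X with ‖x₀‖ = 1 such that ‖U(x₀)‖ > 1 − η'(ε), there exist a bounded operator V : X → ℓ∞ⁿ with ‖V‖ = 1 and z₀ ∈ X with ‖z₀‖ = 1 satisfying ‖V z₀‖ = 1, ‖z₀ − x₀‖ < ε, and ‖V − U‖ < ε. -/

import Mathlib

/-!
On the unit ball `B`, Ekeland's variational principle moves a point `x₀` with `f x₀ > 1 - η`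
by at most `η / δ` to a point `z` at which `f - δ ‖· - z‖` is maximal. Hahn–Banach, applied to
the cone generated by `B - z` on which `f ≤ δ ‖·‖`, gives `h` with `‖h‖ ≤ δ` such that `f - h`
attains its norm at `z`; normalising `f - h` gives a norm-attaining `g` close to `f`
(Bishop–Phelps–Bollobás). For `U : X → ℓ∞ⁿ`, choose a coordinate `i` with `|U x₀ i| > 1 - η`
and replace the functional `U · i` by such a `g`. The other coordinates are unchanged, so the
estimates do not depend on `n`, and `η = ε² / 8`, `δ = ε / 4` work for every `X`.
-/

universe u

open Filter Topology Set Metric Pointwise ContinuousLinearMap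

section Ekeland

variable {α : Type*} [PseudoMetricSpace α] {φ : α → ℝ} {ε : ℝ}

def ekelandSet (φ : α → ℝ) (ε : ℝ) (x : α) : Set α := {y | φ y + ε * dist y x ≤ φ x}

@[simp]
lemma mem_ekelandSet {x y : α} : y ∈ ekelandSet φ ε x ↔ φ y + ε * dist y x ≤ φ x := Iff.rfl

lemma self_mem_ekelandSet (x : α) : x ∈ ekelandSet φ ε x := by
  simp

lemma ekelandSet_subset (hε : 0 ≤ ε) {x y : α} (hy : y ∈ ekelandSet φ ε x) :
    ekelandSet φ ε y ⊆ ekelandSet φ ε x := fun w hw => by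
  rw [mem_ekelandSet] at hy hw ⊢
  nlinarith [dist_triangle w y x]

lemma LowerSemicontinuous.isClosed_ekelandSet (hφ : LowerSemicontinuous φ) (x : α) :
    IsClosed (ekelandSet φ ε x) :=
  (hφ.add (continuous_const.mul (continuous_id.dist continuous_const)).lowerSemicontinuous
    ).isClosed_preimage (φ x)

lemma exists_forall_le_add_of_bddBelow {β : Type*} {f : β → ℝ} {s : Set β} (hs : s.Nonempty)
    (hbdd : BddBelow (f '' s)) {r : ℝ} (hr : 0 < r) : ∃ y ∈ s, ∀ w ∈ s, f y ≤ f w + r := by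
  obtain ⟨_, ⟨y, hy, rfl⟩, hlt⟩ :=
    exists_lt_of_csInf_lt (hs.image f) (lt_add_of_pos_right (sInf (f '' s)) hr)
  exact ⟨y, hy, fun w hw => by linarith [csInf_le hbdd (mem_image_of_mem f hw)]⟩

lemma le_of_forall_le_add_half_pow {a b : ℝ} (h : ∀ n : ℕ, a ≤ b + (1 / 2) ^ n) : a ≤ b :=
  le_of_forall_pos_lt_add fun _ hr =>
    let ⟨n, hn⟩ := exists_pow_lt_of_lt_one hr one_half_lt_one
    (h n).trans_lt (by linarith)

theorem ekeland_variational_principle [CompleteSpace α] (hφ : LowerSemicontinuous φ)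
    (hbdd : BddBelow (range φ)) (hε : 0 < ε) (x₀ : α) :
    ∃ z, φ z + ε * dist z x₀ ≤ φ x₀ ∧ ∀ y, φ z ≤ φ y + ε * dist y z := by
  choose next next_mem next_le using fun (n : ℕ) (x : α) =>
    exists_forall_le_add_of_bddBelow ⟨x, self_mem_ekelandSet (φ := φ) (ε := ε) x⟩
      (hbdd.mono (image_subset_range _ _)) (pow_pos (one_half_pos (α := ℝ)) n)
  let u : ℕ → α := fun n => Nat.rec x₀ next n
  have u_succ (n : ℕ) : u (n + 1) = next n (u n) := rfl
  have antitone_u : ∀ n m, n ≤ m → ekelandSet φ ε (u m) ⊆ ekelandSet φ ε (u n) := by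
    intro n m hnm
    induction m, hnm using Nat.le_induction with
    | base => exact subset_rfl
    | succ m _ ih => exact (ekelandSet_subset hε.le (next_mem m (u m))).trans ih
  -- Each step nearly minimises `φ` over the previous set, so the sets shrink geometrically.
  have dist_le : ∀ n, ∀ y ∈ ekelandSet φ ε (u (n + 1)), ε * dist y (u (n + 1)) ≤ (1 / 2) ^ n := by
    intro n y hy
    have := next_le n (u n) y (ekelandSet_subset hε.le (next_mem n (u n)) hy)
    rw [mem_ekelandSet, u_succ] at hy
    linarith
  have cauchy : CauchySeq fun n => u (n + 1) := by
    refine cauchySeq_of_le_tendsto_0' (fun n => (1 / 2) ^ n / ε) (fun n m hnm => ?_) ?_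
    · rw [dist_comm, le_div_iff₀ hε, mul_comm]
      exact dist_le n _ (antitone_u (n + 1) (m + 1) (by omega) (self_mem_ekelandSet _))
    · simpa using (tendsto_pow_atTop_nhds_zero_of_lt_one (by norm_num : (0 : ℝ) ≤ 1 / 2)
        (by norm_num)).div_const ε
  obtain ⟨z, hz⟩ := cauchySeq_tendsto_of_complete cauchy
  have z_mem : ∀ n, z ∈ ekelandSet φ ε (u n) := fun n =>
    (hφ.isClosed_ekelandSet _).mem_of_tendsto hz <| (eventually_ge_atTop n).mono fun m hm =>
      antitone_u n (m + 1) (by omega) (self_mem_ekelandSet _)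
  refine ⟨z, z_mem 0, fun y => ?_⟩
  by_cases hy : y ∈ ekelandSet φ ε z
  · have : φ z ≤ φ y := le_of_forall_le_add_half_pow fun n => by
      have hz' := z_mem (n + 1)
      have := next_le n (u n) y (ekelandSet_subset hε.le (z_mem n) hy)
      rw [mem_ekelandSet, u_succ] at hz'
      nlinarith [dist_nonneg (x := z) (y := next n (u n))]
    nlinarith [dist_nonneg (x := y) (y := z)]
  · rw [mem_ekelandSet, not_le] at hy
    linarith

end Ekeland

section BishopPhelpsBollobas

variable {X : Type*} [NormedAddCommGroup X] [NormedSpace ℝ X]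

theorem ConvexCone.exists_norm_le_forall_le (K : ConvexCone ℝ X) (hK : K.Pointed)
    (f : X →ₗ[ℝ] ℝ) {δ : ℝ} (hδ : 0 ≤ δ) (hf : ∀ k ∈ K, f k ≤ δ * ‖k‖) :
    ∃ h : X →L[ℝ] ℝ, ‖h‖ ≤ δ ∧ ∀ k ∈ K, f k ≤ h k := by
  have : Nonempty K := ⟨⟨0, hK⟩⟩
  -- `N` is sublinear with `N ≤ δ ‖·‖` and `N (-k) ≤ -f k` on `K`; a linear minorant of it is `h`.
  let N : X → ℝ := fun w => ⨅ k : K, (δ * ‖w + k‖ - f k)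
  have bdd (w : X) : BddBelow (range fun k : K => δ * ‖w + k‖ - f k) := by
    refine ⟨-(δ * ‖w‖), ?_⟩
    rintro _ ⟨k, rfl⟩
    have : ‖(k : X)‖ ≤ ‖w + k‖ + ‖w‖ := by simpa using norm_sub_le (w + k) w
    nlinarith [hf k k.2, mul_le_mul_of_nonneg_left this hδ]
  have N_le (w : X) (k : X) (hk : k ∈ K) : N w ≤ δ * ‖w + k‖ - f k := ciInf_le (bdd w) ⟨k, hk⟩
  have N_smul_le (c : ℝ) (hc : 0 < c) (w : X) : N (c • w) ≤ c * N w := by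
    rw [Real.mul_iInf_of_nonneg hc.le]
    refine le_ciInf fun k => (N_le _ _ (K.smul_mem hc k.2)).trans_eq ?_
    rw [← smul_add, norm_smul, map_smul, Real.norm_of_nonneg hc.le, smul_eq_mul]
    ring
  have N_smul (c : ℝ) (hc : 0 < c) (w : X) : N (c • w) = c * N w := by
    refine (N_smul_le c hc w).antisymm ?_
    calc c * N w = c * N (c⁻¹ • c • w) := by rw [inv_smul_smul₀ hc.ne']
      _ ≤ c * (c⁻¹ * N (c • w)) := by gcongr; exact N_smul_le _ (inv_pos.2 hc) _
      _ = N (c • w) := by field_simp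
  have N_add (w₁ w₂ : X) : N (w₁ + w₂) ≤ N w₁ + N w₂ := by
    refine le_ciInf_add_ciInf fun k₁ k₂ => (N_le _ _ (K.add_mem k₁.2 k₂.2)).trans ?_
    have : ‖w₁ + w₂ + (k₁ + k₂)‖ ≤ ‖w₁ + k₁‖ + ‖w₂ + k₂‖ := by
      rw [add_add_add_comm]; exact norm_add_le _ _
    rw [map_add]
    nlinarith [mul_le_mul_of_nonneg_left this hδ]
  have N_norm (w : X) : N w ≤ δ * ‖w‖ := by simpa using N_le w 0 hK
  obtain ⟨g, -, g_le⟩ := exists_extension_of_le_sublinear ⟨⊥, 0⟩ N N_smul N_add fun x => by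
    simpa [(Submodule.mem_bot ℝ).1 x.2, N] using le_ciInf fun k : K => sub_nonneg.2 <| by
      simpa using hf k k.2
  have g_bound (w : X) : ‖g w‖ ≤ δ * ‖w‖ := by
    rw [Real.norm_eq_abs, abs_le]
    constructor
    · have := (g_le (-w)).trans (N_norm (-w))
      rw [map_neg, norm_neg] at this
      linarith
    · exact (g_le w).trans (N_norm w)
  refine ⟨g.mkContinuous δ g_bound, LinearMap.mkContinuous_norm_le g hδ g_bound, fun k hk => ?_⟩
  simpa using (g_le (-k)).trans (N_le (-k) k hk)

theorem Convex.exists_norm_le_isMaxOn_sub {C : Set X} (hC : Convex ℝ C) {z : X} (hz : z ∈ C)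
    (f : X →L[ℝ] ℝ) {δ : ℝ} (hδ : 0 ≤ δ) (hf : ∀ y ∈ C, f y ≤ f z + δ * ‖y - z‖) :
    ∃ h : X →L[ℝ] ℝ, ‖h‖ ≤ δ ∧ IsMaxOn (f - h) C z := by
  have sub_mem_hull {y : X} (hy : y ∈ C) : y - z ∈ ConvexCone.hull ℝ (-z +ᵥ C) :=
    ConvexCone.subset_hull (by simpa [neg_add_eq_sub] using vadd_mem_vadd_set (a := -z) hy)
  obtain ⟨h, hh, hfh⟩ := (ConvexCone.hull ℝ (-z +ᵥ C)).exists_norm_le_forall_le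
    (by simpa [ConvexCone.Pointed] using sub_mem_hull hz) (f : X →ₗ[ℝ] ℝ) hδ fun k hk => by
      obtain ⟨r, hr, y, ⟨x, hx, rfl⟩, rfl⟩ := (ConvexCone.mem_hull_of_convex (hC.vadd (-z))).1 hk
      simp only [vadd_eq_add, neg_add_eq_sub, ContinuousLinearMap.coe_coe, map_smul, smul_eq_mul,
        norm_smul, Real.norm_of_nonneg hr.le, map_sub]
      nlinarith [hf x hx]
  refine ⟨h, hh, fun y hy => ?_⟩
  have := hfh _ (sub_mem_hull hy)
  simp only [ContinuousLinearMap.coe_coe, map_sub] at this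
  simp only [mem_ofPred_eq, sub_apply]
  linarith

theorem ContinuousLinearMap.norm_eq_of_isMaxOn_closedBall (q : X →L[ℝ] ℝ) {z : X}
    (hz : z ∈ closedBall 0 1) (hq : IsMaxOn q (closedBall 0 1) z) : ‖q‖ = q z := by
  have hmax (y : X) (hy : ‖y‖ ≤ 1) : q y ≤ q z := hq (mem_closedBall_zero_iff.2 hy)
  refine le_antisymm (q.opNorm_le_of_unit_norm (by simpa using hmax 0 (by simp))
    fun y hy => abs_le.2 ⟨?_, hmax y hy.le⟩) ((le_abs_self _).trans ?_)
  · linarith [hmax (-y) (by simp [hy]), q.map_neg y]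
  · simpa using q.le_opNorm_of_le (mem_closedBall_zero_iff.1 hz)

lemma norm_inv_norm_smul_sub_self {v : X} (hv : v ≠ 0) : ‖‖v‖⁻¹ • v - v‖ = |1 - ‖v‖| := by
  have : ‖v‖⁻¹ • v - v = (‖v‖⁻¹ - 1) • v := by rw [sub_smul, one_smul]
  calc ‖‖v‖⁻¹ • v - v‖ = |‖v‖⁻¹ - 1| * |‖v‖| := by rw [this, norm_smul, Real.norm_eq_abs, abs_norm]
    _ = |1 - ‖v‖| := by
      rw [← abs_mul, sub_mul, inv_mul_cancel₀ (norm_ne_zero_iff.2 hv), one_mul, abs_sub_comm]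

theorem ContinuousLinearMap.exists_ekeland_closedBall [CompleteSpace X] (f : X →L[ℝ] ℝ)
    {x₀ : X} (hx₀ : x₀ ∈ closedBall 0 1) {δ : ℝ} (hδ : 0 < δ) :
    ∃ z ∈ closedBall (0 : X) 1, δ * ‖z - x₀‖ ≤ f z - f x₀ ∧
      ∀ y ∈ closedBall (0 : X) 1, f y ≤ f z + δ * ‖y - z‖ := by
  have : CompleteSpace (closedBall (0 : X) 1) := isClosed_closedBall.completeSpace_coe
  have bdd : BddBelow (range fun y : closedBall (0 : X) 1 => -f y) := by
    refine ⟨-‖f‖, ?_⟩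
    rintro _ ⟨y, rfl⟩
    have := (le_abs_self _).trans (f.le_opNorm_of_le (mem_closedBall_zero_iff.1 y.2))
    rw [mul_one] at this
    linarith
  obtain ⟨⟨z, hz⟩, hzx₀, hz_max⟩ := ekeland_variational_principle
    (φ := fun y : closedBall (0 : X) 1 => -f y)
    (f.continuous.comp continuous_subtype_val).neg.lowerSemicontinuous bdd hδ ⟨x₀, hx₀⟩
  refine ⟨z, hz, ?_, fun y hy => ?_⟩
  · simp only [Subtype.dist_eq, dist_eq_norm] at hzx₀
    linarith
  · have := hz_max ⟨y, hy⟩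
    simp only [Subtype.dist_eq, dist_eq_norm] at this
    linarith

theorem bishop_phelps_bollobas [CompleteSpace X] (f : X →L[ℝ] ℝ) (hf : ‖f‖ ≤ 1) {x₀ : X}
    (hx₀ : ‖x₀‖ ≤ 1) {η δ : ℝ} (hδ : 0 < δ) (hηδ : η + δ < 1) (hfx₀ : 1 - η < f x₀) :
    ∃ (g : X →L[ℝ] ℝ) (z : X),
      ‖g‖ = 1 ∧ ‖z‖ = 1 ∧ g z = 1 ∧ ‖z - x₀‖ ≤ η / δ ∧ ‖g - f‖ ≤ η + 2 * δ := by
  have hf_le (y : X) (hy : ‖y‖ ≤ 1) : f y ≤ 1 :=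
    (le_abs_self _).trans ((f.le_opNorm_of_le hy).trans (by rwa [mul_one]))
  have hη : 0 < η := by linarith [hf_le x₀ hx₀]
  obtain ⟨z, hz, hzx₀, hz_max⟩ := f.exists_ekeland_closedBall (mem_closedBall_zero_iff.2 hx₀) hδ
  obtain ⟨h, hh, hq_max⟩ :=
    (convex_closedBall (0 : X) 1).exists_norm_le_isMaxOn_sub hz f hδ.le hz_max
  set q := f - h
  have hq : ‖q‖ = q z := q.norm_eq_of_isMaxOn_closedBall hz hq_max
  have hqz : 1 - η - δ < q z := by
    have hhx₀ : |h x₀| ≤ δ := (h.le_opNorm_of_le hx₀).trans (by rwa [mul_one])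
    have : q x₀ ≤ q z := hq_max (mem_closedBall_zero_iff.2 hx₀)
    simp only [q, sub_apply] at this ⊢
    linarith [abs_le.1 hhx₀]
  have hq_pos : 0 < ‖q‖ := by linarith
  have hz1 : ‖z‖ = 1 := by
    refine le_antisymm (mem_closedBall_zero_iff.1 hz) ?_
    have := (le_abs_self _).trans (q.le_opNorm z)
    rw [hq] at this
    nlinarith
  refine ⟨‖q‖⁻¹ • q, z, norm_smul_inv_norm (norm_pos_iff.1 hq_pos), hz1, ?_, ?_, ?_⟩
  · rw [smul_apply, smul_eq_mul, ← hq, inv_mul_cancel₀ hq_pos.ne']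
  · rw [le_div_iff₀ hδ]
    linarith [hf_le z hz1.le]
  · have hq_le : ‖q‖ ≤ 1 + δ := (norm_sub_le f h).trans (add_le_add hf hh)
    calc ‖‖q‖⁻¹ • q - f‖ ≤ ‖‖q‖⁻¹ • q - q‖ + ‖q - f‖ := norm_sub_le_norm_sub_add_norm_sub _ _ _
      _ = |1 - ‖q‖| + ‖h‖ := by
        rw [norm_inv_norm_smul_sub_self (norm_pos_iff.1 hq_pos), sub_sub_cancel_left, norm_neg]
      _ ≤ η + 2 * δ := by
        have := abs_le.2 (⟨by linarith, by linarith⟩ : -(η + δ) ≤ 1 - ‖q‖ ∧ 1 - ‖q‖ ≤ η + δ)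
        linarith

theorem bishop_phelps_bollobas_abs [CompleteSpace X] (f : X →L[ℝ] ℝ) (hf : ‖f‖ ≤ 1) {x₀ : X}
    (hx₀ : ‖x₀‖ ≤ 1) {η δ : ℝ} (hδ : 0 < δ) (hηδ : η + δ < 1) (hfx₀ : 1 - η < |f x₀|) :
    ∃ (g : X →L[ℝ] ℝ) (z : X),
      ‖g‖ = 1 ∧ ‖z‖ = 1 ∧ |g z| = 1 ∧ ‖z - x₀‖ ≤ η / δ ∧ ‖g - f‖ ≤ η + 2 * δ := by
  rcases le_or_gt 0 (f x₀) with hpos | hneg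
  · obtain ⟨g, z, hg, hz, hgz, hzx₀, hgf⟩ :=
      bishop_phelps_bollobas f hf hx₀ hδ hηδ (by rwa [abs_of_nonneg hpos] at hfx₀)
    exact ⟨g, z, hg, hz, by rw [hgz, abs_one], hzx₀, hgf⟩
  · obtain ⟨g, z, hg, hz, hgz, hzx₀, hgf⟩ := bishop_phelps_bollobas (-f) (by rwa [norm_neg])
      hx₀ hδ hηδ (by rwa [abs_of_neg hneg] at hfx₀)
    refine ⟨-g, z, by rwa [norm_neg], hz, by simp [hgz], hzx₀, ?_⟩
    rwa [← neg_add', norm_neg, ← sub_neg_eq_add]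

theorem bishop_phelps_bollobas_pi [CompleteSpace X] {ι : Type*} [Fintype ι]
    (U : X →L[ℝ] (ι → ℝ)) (hU : ‖U‖ ≤ 1) {x₀ : X} (hx₀ : ‖x₀‖ ≤ 1) {η δ : ℝ} (hδ : 0 < δ)
    (hηδ : η + δ < 1) (hUx₀ : 1 - η < ‖U x₀‖) :
    ∃ (V : X →L[ℝ] (ι → ℝ)) (z : X),
      ‖V‖ = 1 ∧ ‖z‖ = 1 ∧ ‖V z‖ = 1 ∧ ‖z - x₀‖ ≤ η / δ ∧ ‖V - U‖ ≤ η + 2 * δ := by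
  classical
  obtain ⟨i, hi⟩ : ∃ i, 1 - η < |U x₀ i| := by
    by_contra! h
    exact hUx₀.not_ge ((pi_norm_le_iff_of_nonneg (by linarith)).2 h)
  let F : ι → X →L[ℝ] ℝ := fun j => (proj j).comp U
  have hF (j : ι) : ‖F j‖ ≤ 1 := opNorm_le_bound _ zero_le_one fun x =>
    (norm_le_pi_norm (U x) j).trans (U.le_of_opNorm_le hU x)
  obtain ⟨g, z, hg, hz, hgz, hzx₀, hgf⟩ := bishop_phelps_bollobas_abs (F i) (hF i) hx₀ hδ hηδ hi
  let V : X →L[ℝ] (ι → ℝ) := pi (Function.update F i g)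
  have hV : ‖V‖ ≤ 1 := norm_pi_le_of_le (fun j => by
    rcases eq_or_ne j i with rfl | hj
    · simp [hg]
    · simpa [hj] using hF j) zero_le_one
  have hVz : ‖V z‖ = 1 := le_antisymm ((V.le_of_opNorm_le hV z).trans_eq (by simp [hz]))
    (by simpa [V, hgz] using norm_le_pi_norm (V z) i)
  refine ⟨V, z, le_antisymm hV (by simpa [hz, hVz] using V.le_opNorm z), hz, hVz, hzx₀, ?_⟩
  have : V - U = pi (Function.update 0 i (g - F i)) := by
    ext x j
    rcases eq_or_ne j i with rfl | hj <;> simp [V, F, *]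
  rw [this]
  refine norm_pi_le_of_le (fun j => ?_) ((norm_nonneg _).trans hgf)
  rcases eq_or_ne j i with rfl | hj
  · simpa using hgf
  · simpa [hj] using (norm_nonneg _).trans hgf

end BishopPhelpsBollobas

/-- A uniform Bishop-Phelps-Bollobás property for operators into `ℓ∞ⁿ`, with
`η'(ε)` independent of `n` and of `X`. -/
theorem stmt15 (ε : ℝ) (hε : 0 < ε) (hε1 : ε < 1) :
    ∃ η' : ℝ, 0 < η' ∧ η' < 1 ∧
      ∀ (n : ℕ), 0 < n →
        ∀ (X : Type u) [NormedAddCommGroup X] [NormedSpace ℝ X] [CompleteSpace X],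
          ∀ (U : X →L[ℝ] (Fin n → ℝ)) (x₀ : X),
            ‖U‖ = 1 → ‖x₀‖ = 1 → 1 - η' < ‖U x₀‖ →
            ∃ (V : X →L[ℝ] (Fin n → ℝ)) (z₀ : X),
              ‖V‖ = 1 ∧ ‖z₀‖ = 1 ∧ ‖V z₀‖ = 1 ∧ ‖z₀ - x₀‖ < ε ∧ ‖V - U‖ < ε := by
  refine ⟨ε ^ 2 / 8, by positivity, by nlinarith, fun n _ X _ _ _ U x₀ hU hx₀ hUx₀ => ?_⟩
  obtain ⟨V, z, hV, hz, hVz, hzx₀, hVU⟩ := bishop_phelps_bollobas_pi U hU.le hx₀.le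
    (by positivity : 0 < ε / 4) (by nlinarith) hUx₀
  refine ⟨V, z, hV, hz, hVz, hzx₀.trans_lt ?_, hVU.trans_lt (by nlinarith)⟩
  rw [div_lt_iff₀ (by positivity)]
  nlinarith
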